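/- Let C be a finite component module over a poset P with generators g₁,...,gₙ (n ≥ 2) such that g₁ is minimal (its position is below the position of every other generator). Then C decomposes as a direct sum I ⊕ S, where I is an interval module (the submodule generated by g₁) and S is a nonzero semi-component module. -/

import Mathlib

section

variable {K : Type*} [Field K] {P : Type*} [PartialOrder P] {d : P → ℕ}

/-- A matrix is a component matrix if all entries are `0` or `1` and every
column contains exactly one `1`. -/
def IsComponentMatrix {ι κ : Type*} (A : Matrix ι κ K) : Prop :=
  (∀ i j, A i j = 0 ∨ A i j = 1) ∧ ∀ j, ∃! i, A i j = 1

/-- A matrix is a semi-component matrix if all entries are `0` or `1` and every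
column contains at most one `1`. -/
def IsSemiComponentMatrix {ι κ : Type*} (A : Matrix ι κ K) : Prop :=
  (∀ i j, A i j = 0 ∨ A i j = 1) ∧ ∀ j i i', A i j = 1 → A i' j = 1 → i = i'

/-- The data of a persistence module over `P` with dimension vector `d`,
realised on the standard carriers `Fin (d p) → K`. -/
def PersistenceData (K : Type*) [Field K] (P : Type*) [PartialOrder P]
    (d : P → ℕ) :=
  ∀ p q : P, p ≤ q → ((Fin (d p) → K) →ₗ[K] (Fin (d q) → K))

/-- Functoriality of the structure maps. -/
def IsFunctorial (M : PersistenceData K P d) : Prop :=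
  (∀ p : P, M p p le_rfl = LinearMap.id) ∧
  ∀ (p q r : P) (hpq : p ≤ q) (hqr : q ≤ r),
    M q r hqr ∘ₗ M p q hpq = M p r (hpq.trans hqr)

/-- The standard basis vector `i` at position `p` is a generator: it is not in
the image of any structure map from a strictly smaller position. -/
def IsGenerator (M : PersistenceData K P d) (p : P) (i : Fin (d p)) : Prop :=
  ∀ (q : P) (h : q ≤ p), q ≠ p →
    (Pi.single i 1 : Fin (d p) → K) ∉ LinearMap.range (M q p h)

end

/-!
A component module's structure maps send standard basis vectors to standard basis vectors, so
they preserve the coordinate-sum functional `σ`; hence `W = ker σ` is a subrepresentation. The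
span `U` of the images of `g₁` is another, and `σ = 1` on these images, so `C = U ⊕ W` wherever
`g₁` reaches. Everywhere else `C` vanishes: every basis vector is the image of a generator, and
all generators lie above `g₁`. Where `e_a` is the image of `g₁`, the vectors `e_j - e_a`
(`j ≠ a`) form a basis of `ker σ` which the structure maps send to basis vectors, or to `0` when
`e_j` lands on the image of `g₁`: these are semi-component matrices. A second generator `e_j`
gives the nonzero vector `e_j - e_a` of `W`.
-/

open Module LinearMap

section LinearAlgebra

variable {K : Type*} [Field K] {ι κ : Type*}

theorem IsComponentMatrix.exists_map_single_eq [Fintype ι] [DecidableEq ι] [DecidableEq κ]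
    {f : (ι → K) →ₗ[K] (κ → K)} (hf : IsComponentMatrix (toMatrix' f)) (j : ι) :
    ∃ i, f (Pi.single j 1) = Pi.single i 1 := by
  obtain ⟨h01, huniq⟩ := hf
  obtain ⟨i, hi, hiu⟩ := huniq j
  refine ⟨i, funext fun i' => ?_⟩
  rw [Pi.single_apply, ← toMatrix'_apply]
  split_ifs with h
  · exact h ▸ hi
  · exact (h01 i' j).resolve_right fun h1 => h (hiu i' h1)

theorem isSemiComponentMatrix_toMatrix [Fintype ι] [Finite κ] [DecidableEq ι]
    {V W : Type*} [AddCommGroup V] [Module K V] [AddCommGroup W] [Module K W]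
    {b : Basis ι K V} {c : Basis κ K W} {f : V →ₗ[K] W}
    (hf : ∀ j, f (b j) = 0 ∨ ∃ i, f (b j) = c i) : IsSemiComponentMatrix (toMatrix b c f) := by
  classical
  have hcol : ∀ j, c.repr (f (b j)) = 0 ∨ ∃ k, c.repr (f (b j)) = Finsupp.single k 1 := fun j =>
    (hf j).imp (fun h => by simp [h]) fun ⟨k, h⟩ => ⟨k, by simp [h]⟩
  refine ⟨fun i j => ?_, fun j i i' h1 h2 => ?_⟩ <;> rw [toMatrix_apply] at *
  · rcases hcol j with h | ⟨k, h⟩ <;> simp [h, Finsupp.single_apply, em']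
  · rcases hcol j with h | ⟨k, h⟩ <;> simp [h, Finsupp.single_apply] at h1 h2
    exact h1.symm.trans h2

theorem exists_map_single_eq_of_single_mem_range [Finite ι] [DecidableEq ι] [DecidableEq κ]
    {f : (ι → K) →ₗ[K] (κ → K)} (hf : ∀ k, ∃ i, f (Pi.single k 1) = Pi.single i 1) {j : κ}
    (hj : Pi.single j 1 ∈ range f) : ∃ k, f (Pi.single k 1) = Pi.single j 1 := by
  by_contra! hne
  obtain ⟨v, hv⟩ := hj
  have hzero : (proj j).comp f = 0 := (Pi.basisFun K ι).ext fun k => by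
    obtain ⟨i, hi⟩ := hf k
    have hij : i ≠ j := by rintro rfl; exact hne k hi
    simp [hi, Pi.single_eq_of_ne hij.symm]
  simpa [hv] using LinearMap.congr_fun hzero v

theorem isCompl_span_singleton_ker {V : Type*} [AddCommGroup V] [Module K V] {φ : V →ₗ[K] K}
    {w : V} (hw : φ w = 1) : IsCompl (K ∙ w) (ker φ) := by
  refine ⟨Submodule.disjoint_def.mpr fun x hx hxk => ?_,
    codisjoint_iff.mpr (eq_top_iff.mpr fun v _ => Submodule.mem_sup.mpr ?_)⟩
  · obtain ⟨c, rfl⟩ := Submodule.mem_span_singleton.mp hx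
    simp_all
  · exact ⟨φ v • w, Submodule.smul_mem _ _ (Submodule.mem_span_singleton_self w),
      v - φ v • w, by simp [hw], add_sub_cancel _ _⟩

theorem bijective_restrict_span_singleton {V W : Type*} [AddCommGroup V] [Module K V]
    [AddCommGroup W] [Module K W] {f : V →ₗ[K] W} {w : V} (hw : f w ≠ 0)
    {S : Submodule K V} {T : Submodule K W} (hS : S = K ∙ w) (hT : T = K ∙ f w)
    (hST : ∀ x ∈ S, f x ∈ T) : Function.Bijective (f.restrict hST) := by
  subst hS hT
  refine ⟨(injective_iff_map_eq_zero _).mpr fun ⟨x, hx⟩ hfx => ?_, fun ⟨y, hy⟩ => ?_⟩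
  · obtain ⟨c, rfl⟩ := Submodule.mem_span_singleton.mp hx
    have : c • f w = 0 := by simpa using congrArg Subtype.val hfx
    simp_all
  · obtain ⟨c, rfl⟩ := Submodule.mem_span_singleton.mp hy
    exact ⟨⟨c • w, Submodule.smul_mem _ _ (Submodule.mem_span_singleton_self w)⟩,
      Subtype.ext (by simp)⟩

section CoordSum

variable [Fintype ι] [DecidableEq ι]

def coordSum : (ι → K) →ₗ[K] K := ∑ i, proj i

omit [DecidableEq ι] in
@[simp]
theorem coordSum_apply (v : ι → K) : coordSum v = ∑ i, v i := by
  simp [coordSum]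

theorem coordSum_single (i : ι) : coordSum (Pi.single i (1 : K)) = 1 := by
  simp

theorem coordSum_map [Fintype κ] [DecidableEq κ] {f : (ι → K) →ₗ[K] (κ → K)}
    (hf : ∀ j, ∃ i, f (Pi.single j 1) = Pi.single i 1) (v : ι → K) :
    coordSum (f v) = coordSum v :=
  LinearMap.congr_fun ((Pi.basisFun K ι).ext (f₁ := coordSum ∘ₗ f) (f₂ := coordSum) fun j => by
    obtain ⟨i, hi⟩ := hf j
    simp [hi]) v

theorem sum_smul_single_sub_single (a : ι) (v : ι → K) :
    ∑ j : {j // j ≠ a}, v j • (Pi.single (j : ι) 1 - Pi.single a 1) =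
      v - coordSum v • Pi.single a 1 := by
  have hv := Fintype.sum_eq_add_sum_subtype_ne (fun j => Pi.single j (v j)) a
  have hs := Fintype.sum_eq_add_sum_subtype_ne v a
  rw [Finset.univ_sum_single] at hv
  simp only [smul_sub, Finset.sum_sub_distrib, ← Finset.sum_smul, coordSum_apply, hs, add_smul]
  simp only [← Pi.single_smul', smul_eq_mul, mul_one]
  conv_rhs => enter [1]; rw [hv]
  abel

noncomputable def kerCoordSumBasis (a : ι) :
    Basis {j // j ≠ a} K (ker (coordSum : (ι → K) →ₗ[K] K)) :=
  .mk (v := fun j => ⟨Pi.single (j : ι) 1 - Pi.single a 1, by simp⟩)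
    (LinearIndependent.of_comp (funLeft K K Subtype.val ∘ₗ (ker coordSum).subtype) <| by
      convert (Pi.basisFun K {j // j ≠ a}).linearIndependent using 1
      ext j i
      simp [Pi.single_apply, Subtype.ext_iff, i.2])
    fun v _ => (Submodule.mem_span_range_iff_exists_fun K).mpr ⟨fun j => (v : ι → K) j,
      Subtype.ext (by simpa [-coordSum_apply, v.2] using sum_smul_single_sub_single a (v : ι → K))⟩

theorem coe_kerCoordSumBasis (a : ι) (j : {j // j ≠ a}) :
    ((kerCoordSumBasis a j : ker (coordSum : (ι → K) →ₗ[K] K)) : ι → K) =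
      Pi.single (j : ι) 1 - Pi.single a 1 := by
  simp [kerCoordSumBasis]

theorem restrict_kerCoordSumBasis [Fintype κ] [DecidableEq κ] {f : (ι → K) →ₗ[K] (κ → K)}
    (hf : ∀ j, ∃ i, f (Pi.single j 1) = Pi.single i 1)
    (hker : ∀ v ∈ ker coordSum, f v ∈ ker coordSum) {a : ι} {a' : κ}
    (ha : f (Pi.single a 1) = Pi.single a' 1) (j : {j // j ≠ a}) :
    f.restrict hker (kerCoordSumBasis a j) = 0 ∨
      ∃ i, f.restrict hker (kerCoordSumBasis a j) = kerCoordSumBasis a' i := by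
  obtain ⟨i, hi⟩ := hf j
  simp only [Subtype.ext_iff, coe_restrict_apply, coe_kerCoordSumBasis, map_sub, hi, ha,
    ZeroMemClass.coe_zero]
  by_cases h : i = a'
  · exact .inl (by rw [h, sub_self])
  · exact .inr ⟨⟨i, h⟩, rfl⟩

theorem ker_coordSum_ne_bot {i j : ι} (h : i ≠ j) : ker (coordSum : (ι → K) →ₗ[K] K) ≠ ⊥ :=
  (Submodule.ne_bot_iff _).mpr ⟨_, (kerCoordSumBasis j ⟨i, h⟩).2,
    by simpa using (kerCoordSumBasis j).ne_zero ⟨i, h⟩⟩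

end CoordSum

end LinearAlgebra

section PersistenceModule

variable {K : Type*} [Field K] {P : Type*} [PartialOrder P] {d : P → ℕ}
  {M : PersistenceData K P d}

theorem IsFunctorial.map_self (hM : IsFunctorial M) (p : P) (v : Fin (d p) → K) :
    M p p le_rfl v = v := by
  rw [hM.1 p, id_apply]

theorem IsFunctorial.map_map (hM : IsFunctorial M) {p q r : P} (hpq : p ≤ q) (hqr : q ≤ r)
    (v : Fin (d p) → K) : M q r hqr (M p q hpq v) = M p r (hpq.trans hqr) v := by
  rw [← hM.2 p q r hpq hqr, comp_apply]

def IsComponentModule (M : PersistenceData K P d) : Prop :=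
  ∀ (p q : P) (h : p ≤ q), IsComponentMatrix (toMatrix' (M p q h))

theorem IsComponentModule.exists_map_single_eq (hC : IsComponentModule M) {p q : P}
    (h : p ≤ q) (j : Fin (d p)) : ∃ i, M p q h (Pi.single j 1) = Pi.single i 1 :=
  (hC p q h).exists_map_single_eq j

theorem IsComponentModule.map_single_ne_zero (hC : IsComponentModule M) {p q : P}
    (h : p ≤ q) (j : Fin (d p)) : M p q h (Pi.single j 1) ≠ 0 := by
  obtain ⟨i, hi⟩ := hC.exists_map_single_eq h j
  simp [hi]

theorem IsComponentModule.map_mem_ker_coordSum (hC : IsComponentModule M) {p q : P}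
    (h : p ≤ q) : ∀ v ∈ ker coordSum, M p q h v ∈ ker coordSum := fun v hv => by
  rwa [mem_ker, coordSum_map (hC.exists_map_single_eq h)]

theorem exists_isGenerator_map_eq [WellFoundedLT P] (hM : IsFunctorial M)
    (hC : IsComponentModule M) (p : P) (j : Fin (d p)) :
    ∃ r, ∃ h : r ≤ p, ∃ k, IsGenerator M r k ∧ M r p h (Pi.single k 1) = Pi.single j 1 := by
  induction p using WellFoundedLT.induction with
  | _ p ih =>
    by_cases hj : IsGenerator M p j
    · exact ⟨p, le_rfl, j, hj, hM.map_self p _⟩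
    obtain ⟨q, hqp, hne, hrange⟩ : ∃ q, ∃ h : q ≤ p, q ≠ p ∧
        (Pi.single j 1 : Fin (d p) → K) ∈ range (M q p h) := by
      simpa [IsGenerator] using hj
    obtain ⟨k, hk⟩ := exists_map_single_eq_of_single_mem_range (hC.exists_map_single_eq hqp) hrange
    obtain ⟨r, hrq, l, hl, hlk⟩ := ih q (lt_of_le_of_ne hqp hne) k
    exact ⟨r, hrq.trans hqp, l, hl, by rw [← hM.map_map hrq hqp, hlk, hk]⟩

theorem isEmpty_of_not_le [WellFoundedLT P] (hM : IsFunctorial M) (hC : IsComponentModule M)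
    {p₁ : P} (hmin : ∀ (q : P) (j : Fin (d q)), IsGenerator M q j → p₁ ≤ q) {p : P}
    (hp : ¬p₁ ≤ p) : IsEmpty (Fin (d p)) :=
  ⟨fun j => by
    obtain ⟨r, hr, k, hk, -⟩ := exists_isGenerator_map_eq hM hC p j
    exact hp ((hmin r k hk).trans hr)⟩

end PersistenceModule

section Decomposition

variable {K : Type*} [Field K] {P : Type*} [PartialOrder P] {d : P → ℕ}
  {M : PersistenceData K P d}

open scoped Classical in
noncomputable def generatedSubmodule (M : PersistenceData K P d) {p₁ : P} (v : Fin (d p₁) → K)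
    (p : P) : Submodule K (Fin (d p) → K) :=
  if hp : p₁ ≤ p then K ∙ M p₁ p hp v else ⊥

variable {p₁ : P} {v : Fin (d p₁) → K}

theorem generatedSubmodule_of_le {p : P} (hp : p₁ ≤ p) :
    generatedSubmodule M v p = K ∙ M p₁ p hp v :=
  dif_pos hp

theorem generatedSubmodule_of_not_le {p : P} (hp : ¬p₁ ≤ p) : generatedSubmodule M v p = ⊥ :=
  dif_neg hp

theorem IsFunctorial.map_mem_generatedSubmodule (hM : IsFunctorial M) {p q : P} (h : p ≤ q) :
    ∀ x ∈ generatedSubmodule M v p, M p q h x ∈ generatedSubmodule M v q := fun x hx => by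
  by_cases hp : p₁ ≤ p
  · rw [generatedSubmodule_of_le hp] at hx
    obtain ⟨c, rfl⟩ := Submodule.mem_span_singleton.mp hx
    rw [generatedSubmodule_of_le (hp.trans h), map_smul, hM.map_map]
    exact Submodule.smul_mem _ _ (Submodule.mem_span_singleton_self _)
  · rw [generatedSubmodule_of_not_le hp, Submodule.mem_bot] at hx
    rw [hx, map_zero]
    exact Submodule.zero_mem _

theorem finrank_generatedSubmodule_le_one (p : P) :
    finrank K (generatedSubmodule M v p) ≤ 1 := by
  by_cases hp : p₁ ≤ p
  · rw [generatedSubmodule_of_le hp]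
    exact (finrank_span_le_card _).trans (by simp)
  · rw [generatedSubmodule_of_not_le hp, finrank_bot]
    exact zero_le_one

theorem IsFunctorial.generatedSubmodule_self_ne_bot (hM : IsFunctorial M) (hv : v ≠ 0) :
    generatedSubmodule M v p₁ ≠ ⊥ := by
  rw [generatedSubmodule_of_le le_rfl, hM.map_self, Ne, Submodule.span_singleton_eq_bot]
  exact hv

theorem IsFunctorial.bijective_restrict_generatedSubmodule (hM : IsFunctorial M)
    (hv : ∀ q (hq : p₁ ≤ q), M p₁ q hq v ≠ 0) {p q : P} (h : p ≤ q)
    (hne : generatedSubmodule M v p ≠ ⊥) :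
    Function.Bijective ((M p q h).restrict (hM.map_mem_generatedSubmodule (v := v) h)) := by
  have hp : p₁ ≤ p := by
    by_contra hp
    exact hne (generatedSubmodule_of_not_le hp)
  refine bijective_restrict_span_singleton ?_ (generatedSubmodule_of_le hp) ?_ _
  · rw [hM.map_map]
    exact hv q _
  · rw [generatedSubmodule_of_le (hp.trans h), hM.map_map]

theorem IsComponentModule.isCompl_generatedSubmodule_ker_coordSum (hC : IsComponentModule M)
    (hsupp : ∀ p, ¬p₁ ≤ p → IsEmpty (Fin (d p))) (i₁ : Fin (d p₁)) (p : P) :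
    IsCompl (generatedSubmodule M (Pi.single i₁ 1) p) (ker coordSum) := by
  by_cases hp : p₁ ≤ p
  · rw [generatedSubmodule_of_le hp]
    exact isCompl_span_singleton_ker
      (by rw [coordSum_map (hC.exists_map_single_eq hp), coordSum_single])
  · have := hsupp p hp
    rw [generatedSubmodule_of_not_le hp, Subsingleton.elim (ker coordSum) ⊤]
    exact isCompl_bot_top

theorem IsComponentModule.ker_coordSum_ne_bot_of_isGenerator (hC : IsComponentModule M)
    (hM : IsFunctorial M) {i₁ : Fin (d p₁)} {q : P} {j : Fin (d q)} (hj : IsGenerator M q j)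
    (hne : (⟨q, j⟩ : Σ p, Fin (d p)) ≠ ⟨p₁, i₁⟩) (hq : p₁ ≤ q) :
    ker (coordSum : (Fin (d q) → K) →ₗ[K] K) ≠ ⊥ := by
  obtain ⟨a, ha⟩ := hC.exists_map_single_eq hq i₁
  refine ker_coordSum_ne_bot fun hja : j = a => ?_
  obtain rfl | hqp := eq_or_ne q p₁
  · rw [hM.map_self] at ha
    have hi₁ : i₁ = a := (Pi.basisFun K _).injective (by simpa using ha)
    exact hne (by rw [hja, hi₁])
  · exact hj p₁ hq hqp.symm ⟨_, hja ▸ ha⟩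

theorem IsComponentModule.exists_basis_isSemiComponentMatrix (hC : IsComponentModule M)
    (hM : IsFunctorial M) (hsupp : ∀ p, ¬p₁ ≤ p → IsEmpty (Fin (d p))) (i₁ : Fin (d p₁)) :
    ∃ b : ∀ p, Basis (Fin (finrank K (ker (coordSum : (Fin (d p) → K) →ₗ[K] K)))) K
        (ker (coordSum : (Fin (d p) → K) →ₗ[K] K)),
      ∀ p q (h : p ≤ q), IsSemiComponentMatrix
        (toMatrix (b p) (b q) ((M p q h).restrict (hC.map_mem_ker_coordSum h))) := by
  classical
  choose a ha using fun p (hp : p₁ ≤ p) => hC.exists_map_single_eq hp i₁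
  let e p hp :=
    Fintype.equivFinOfCardEq (finrank_eq_card_basis (kerCoordSumBasis (K := K) (a p hp))).symm
  refine ⟨fun p => if hp : p₁ ≤ p then (kerCoordSumBasis (a p hp)).reindex (e p hp)
    else finBasis K _, fun p q h => isSemiComponentMatrix_toMatrix fun j => ?_⟩
  by_cases hp : p₁ ≤ p
  · have hq := hp.trans h
    simp only [dif_pos hp, dif_pos hq, Basis.reindex_apply]
    have hpq : M p q h (Pi.single (a p hp) 1) = Pi.single (a q hq) 1 := by
      rw [← ha p hp, hM.map_map, ha]
    exact (restrict_kerCoordSumBasis (hC.exists_map_single_eq h) _ hpq _).imp_right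
      fun ⟨i, hi⟩ => ⟨e q hq i, by simpa using hi⟩
  · have := hsupp p hp
    exact .inl ((congrArg _ (Subsingleton.elim _ 0)).trans (map_zero _))

end Decomposition

theorem stmt_16 (K : Type*) [Field K] (P : Type*) [PartialOrder P] [Fintype P]
    (d : P → ℕ) (M : PersistenceData K P d)
    (hfunct : IsFunctorial M)
    (hcomp : ∀ (p q : P) (h : p ≤ q),
      IsComponentMatrix (LinearMap.toMatrix' (M p q h)))
    (p₁ : P) (i₁ : Fin (d p₁))
    (hmin : ∀ (q : P) (j : Fin (d q)), IsGenerator M q j → p₁ ≤ q)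
    (htwo : ∃ (q : P) (j : Fin (d q)), IsGenerator M q j ∧
      (⟨q, j⟩ : Σ p : P, Fin (d p)) ≠ ⟨p₁, i₁⟩) :
    ∃ (U W : ∀ p : P, Submodule K (Fin (d p) → K))
      (hU : ∀ (p q : P) (h : p ≤ q), ∀ v ∈ U p, M p q h v ∈ U q)
      (hW : ∀ (p q : P) (h : p ≤ q), ∀ v ∈ W p, M p q h v ∈ W q),
      (∀ p : P, IsCompl (U p) (W p)) ∧
      -- `I = U` is an interval module
      (∀ p : P, Module.finrank K (U p) ≤ 1) ∧ (∃ p : P, U p ≠ ⊥) ∧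
      (∀ (p q : P) (h : p ≤ q), U p ≠ ⊥ →
        Function.Bijective ((M p q h).restrict (hU p q h))) ∧
      -- `S = W` is a nonzero semi-component module
      (∃ p : P, W p ≠ ⊥) ∧
      (∃ b : ∀ p : P, Module.Basis (Fin (Module.finrank K (W p))) K (W p),
        ∀ (p q : P) (h : p ≤ q),
          IsSemiComponentMatrix
            (LinearMap.toMatrix (b p) (b q) ((M p q h).restrict (hW p q h)))) := by
  have hC : IsComponentModule M := hcomp
  have hsupp (p : P) (hp : ¬p₁ ≤ p) : IsEmpty (Fin (d p)) :=
    isEmpty_of_not_le hfunct hC hmin hp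
  obtain ⟨q, j, hj, hne⟩ := htwo
  exact ⟨generatedSubmodule M (Pi.single i₁ 1), fun p => ker coordSum,
    fun p q h => hfunct.map_mem_generatedSubmodule h, fun p q h => hC.map_mem_ker_coordSum h,
    hC.isCompl_generatedSubmodule_ker_coordSum hsupp i₁, finrank_generatedSubmodule_le_one,
    ⟨p₁, hfunct.generatedSubmodule_self_ne_bot (by simp)⟩,
    fun p q h => hfunct.bijective_restrict_generatedSubmodule
      (fun q hq => hC.map_single_ne_zero hq i₁) h,
    ⟨q, hC.ker_coordSum_ne_bot_of_isGenerator hfunct hj hne (hmin q j hj)⟩,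
    hC.exists_basis_isSemiComponentMatrix hfunct hsupp i₁⟩
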